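/- arXiv:2003.12334 — 3 statements merged into one kernel-verified Lean document; each statement's English description precedes it below -/
import Mathlib

section
/- Let k(t,s) = (1/(m!)²) ∫_0^{s∧t} (s−ξ)^m (t−ξ)^m dξ be the covariance of the m-fold integrated Brownian motion. Then for every T > 0, lim_{ε→0} (k(T+εt,T+εs) − k(T+εt,T) − k(T+εs,T) + k(T,T)) / ε² = (1/(m!)²) (m²/(2m−1)) T^{2m−1} s t, uniformly for (t,s) ∈ [0,1]². -/
/-!
Write `K(t,s) = ∫_0^{s∧t} (s-ξ)^m (t-ξ)^m dξ`, so that `k = K / (m!)²`. For `a = T + εt` and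
`b = T + εs`, splitting the integrals at `ξ = T` gives the rectangular increment
`∫_0^T ((b-ξ)^m - (T-ξ)^m) ((a-ξ)^m - (T-ξ)^m) dξ + K(εt, εs)`.
Since `(y+h)^m - y^m = h Q(h,y)` with the polynomial `Q(h,y) = ∑_{i<m} (y+h)^i y^(m-1-i)`, the
first term is `ε² s t G(εs, εt)` for a continuous `G`, and `K(εt, εs) = ε^(2m+1) K(t,s)` by
scaling. So the quotient in the theorem is, for `ε > 0`, a function jointly continuous in `ε` and
`(t,s)`; uniform continuity on a compact set gives uniform convergence on `[0,1]²`, and the limit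
is `s t G(0,0) = s t m² T^(2m-1) / (2m-1)` since `Q(0,y) = m y^(m-1)`.
Below, `K = ibmCov m`, `Q = powSlope m` and `G = slopeGram m T`.
-/

open MeasureTheory Set Filter Topology

theorem Continuous.tendstoUniformlyOn_of_isCompact {α β γ : Type*} [UniformSpace α]
    [WeaklyLocallyCompactSpace α] [UniformSpace β] [UniformSpace γ] {F : α → β → γ}
    (hF : Continuous ↿F) {K : Set β} (hK : IsCompact K) (s : Set α) (x : α) :
    TendstoUniformlyOn F (F x) (𝓝[s] x) K := by
  obtain ⟨U, hU, hxU⟩ := exists_compact_mem_nhds x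
  have hlim : TendstoUniformlyOn F (F x) (𝓝 x) K := by
    simpa only [nhdsWithin_eq_nhds.2 hxU] using
      ((hU.prod hK).uniformContinuousOn_of_continuous hF.continuousOn).tendstoUniformlyOn
        (mem_of_mem_nhds hxU)
  exact fun u hu => (hlim u hu).filter_mono nhdsWithin_le_nhds

def powSlope (m : ℕ) (h y : ℝ) : ℝ := ∑ i ∈ Finset.range m, (y + h) ^ i * y ^ (m - 1 - i)

theorem pow_add_sub_pow_eq_mul_powSlope (m : ℕ) (h y : ℝ) :
    (y + h) ^ m - y ^ m = h * powSlope m h y := by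
  rw [powSlope, ← geom_sum₂_mul, add_sub_cancel_left, mul_comm]

theorem powSlope_zero_left (m : ℕ) (y : ℝ) : powSlope m 0 y = m * y ^ (m - 1) := by
  simp only [powSlope, add_zero, geom_sum₂_self]

@[fun_prop]
theorem Continuous.powSlope {X : Type*} [TopologicalSpace X] (m : ℕ) {f g : X → ℝ}
    (hf : Continuous f) (hg : Continuous g) : Continuous fun x => powSlope m (f x) (g x) := by
  unfold _root_.powSlope; fun_prop

noncomputable def ibmCov (m : ℕ) (t s : ℝ) : ℝ :=
  ∫ ξ in Ioc (0:ℝ) (min s t), (s - ξ) ^ m * (t - ξ) ^ m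

theorem ibmCov_eq_intervalIntegral (m : ℕ) (t s : ℝ) :
    ibmCov m t s = ∫ ξ in (0:ℝ)..max (min s t) 0, (s - ξ) ^ m * (t - ξ) ^ m := by
  rw [intervalIntegral.integral_of_le (le_max_right _ _), ibmCov]
  rcases le_total 0 (min s t) with h | h
  · rw [max_eq_left h]
  · rw [max_eq_right h, Ioc_eq_empty_of_le h, Ioc_self]

@[fun_prop]
theorem Continuous.ibmCov {X : Type*} [TopologicalSpace X] (m : ℕ) {f g : X → ℝ}
    (hf : Continuous f) (hg : Continuous g) : Continuous fun x => ibmCov m (f x) (g x) := by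
  simp only [ibmCov_eq_intervalIntegral]
  fun_prop

theorem ibmCov_mul_mul (m : ℕ) {ε : ℝ} (hε : 0 ≤ ε) (t s : ℝ) :
    ibmCov m (ε * t) (ε * s) = ε ^ (2 * m + 1) * ibmCov m t s := by
  have hbound : max (min (ε * s) (ε * t)) 0 = ε * max (min s t) 0 := by
    rw [mul_max_of_nonneg _ _ hε, mul_min_of_nonneg _ _ hε, mul_zero]
  calc ibmCov m (ε * t) (ε * s)
      = ∫ ξ in ε * 0..ε * max (min s t) 0, (ε * s - ξ) ^ m * (ε * t - ξ) ^ m := by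
        rw [ibmCov_eq_intervalIntegral, mul_zero, hbound]
    _ = ε * ∫ u in 0..max (min s t) 0, (ε * s - ε * u) ^ m * (ε * t - ε * u) ^ m :=
        (intervalIntegral.smul_integral_comp_mul_left _ ε).symm
    _ = ε ^ (2 * m + 1) * ibmCov m t s := by
        rw [ibmCov_eq_intervalIntegral, ← intervalIntegral.integral_const_mul,
          ← intervalIntegral.integral_const_mul]
        congr 1 with u
        simp only [← mul_sub, mul_pow]
        ring

theorem ibmCov_rect_increment (m : ℕ) {T a b : ℝ} (hT : 0 ≤ T) (ha : T ≤ a) (hb : T ≤ b) :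
    ibmCov m a b - ibmCov m a T - ibmCov m b T + ibmCov m T T =
      (∫ ξ in (0:ℝ)..T, ((b - ξ) ^ m - (T - ξ) ^ m) * ((a - ξ) ^ m - (T - ξ) ^ m)) +
        ibmCov m (a - T) (b - T) := by
  have hint : ∀ c d u v : ℝ,
      IntervalIntegrable (fun ξ => (c - ξ) ^ m * (d - ξ) ^ m) volume u v :=
    fun c d u v => (by fun_prop : Continuous _).intervalIntegrable u v
  have hmin : T ≤ min b a := le_min hb ha
  have hsplit : ibmCov m a b = (∫ ξ in (0:ℝ)..T, (b - ξ) ^ m * (a - ξ) ^ m) +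
      ∫ ξ in T..min b a, (b - ξ) ^ m * (a - ξ) ^ m := by
    rw [ibmCov_eq_intervalIntegral, max_eq_left (hT.trans hmin),
      intervalIntegral.integral_add_adjacent_intervals (hint _ _ _ _) (hint _ _ _ _)]
  have hshift : ∫ ξ in T..min b a, (b - ξ) ^ m * (a - ξ) ^ m = ibmCov m (a - T) (b - T) := by
    rw [ibmCov_eq_intervalIntegral, min_sub_sub_right, max_eq_left (sub_nonneg.2 hmin)]
    have := intervalIntegral.integral_comp_add_right
      (fun ξ => (b - ξ) ^ m * (a - ξ) ^ m) T (a := 0) (b := min b a - T)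
    simp only [zero_add, sub_add_cancel] at this
    rw [← this]
    congr 1 with u
    ring
  have hexpand : ∫ ξ in (0:ℝ)..T, ((b - ξ) ^ m - (T - ξ) ^ m) * ((a - ξ) ^ m - (T - ξ) ^ m) =
      (∫ ξ in (0:ℝ)..T, (b - ξ) ^ m * (a - ξ) ^ m) - (∫ ξ in (0:ℝ)..T, (T - ξ) ^ m * (a - ξ) ^ m)
        - (∫ ξ in (0:ℝ)..T, (T - ξ) ^ m * (b - ξ) ^ m)
        + ∫ ξ in (0:ℝ)..T, (T - ξ) ^ m * (T - ξ) ^ m := by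
    rw [← intervalIntegral.integral_sub (hint _ _ _ _) (hint _ _ _ _),
      ← intervalIntegral.integral_sub ((hint _ _ _ _).sub (hint _ _ _ _)) (hint _ _ _ _),
      ← intervalIntegral.integral_add (((hint _ _ _ _).sub (hint _ _ _ _)).sub (hint _ _ _ _))
        (hint _ _ _ _)]
    congr 1 with ξ
    ring
  rw [hsplit, hshift, hexpand, ibmCov_eq_intervalIntegral m a T,
    ibmCov_eq_intervalIntegral m b T, ibmCov_eq_intervalIntegral m T T, min_eq_left ha,
    min_eq_left hb, min_self, max_eq_left hT]
  ring

noncomputable def slopeGram (m : ℕ) (T u v : ℝ) : ℝ :=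
  ∫ ξ in (0:ℝ)..T, powSlope m u (T - ξ) * powSlope m v (T - ξ)

@[fun_prop]
theorem Continuous.slopeGram {X : Type*} [TopologicalSpace X] (m : ℕ) (T : ℝ) {f g : X → ℝ}
    (hf : Continuous f) (hg : Continuous g) : Continuous fun x => slopeGram m T (f x) (g x) :=
  intervalIntegral.continuous_parametric_intervalIntegral_of_continuous' (by fun_prop) _ _

theorem slopeGram_zero_zero {m : ℕ} (hm : 1 ≤ m) (T : ℝ) :
    slopeGram m T 0 0 = m ^ 2 * T ^ (2 * m - 1) / (2 * m - 1) := by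
  obtain ⟨n, rfl⟩ := Nat.exists_eq_add_of_le' hm
  have hsq : ∀ ξ : ℝ, powSlope (n + 1) 0 (T - ξ) * powSlope (n + 1) 0 (T - ξ) =
      ((n : ℝ) + 1) ^ 2 * (T - ξ) ^ (2 * n) := by
    intro ξ
    rw [powSlope_zero_left]
    push_cast
    ring
  simp only [slopeGram, hsq, intervalIntegral.integral_const_mul,
    intervalIntegral.integral_comp_sub_left (fun x => x ^ (2 * n)), integral_pow]
  rw [show 2 * (n + 1) - 1 = 2 * n + 1 by omega, sub_zero, sub_self, zero_pow (by omega), sub_zero]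
  push_cast
  ring

theorem ibmCov_rect_increment_eq (m : ℕ) {T ε s t : ℝ} (hT : 0 ≤ T) (hε : 0 ≤ ε) (hs : 0 ≤ s)
    (ht : 0 ≤ t) :
    ibmCov m (T + ε * t) (T + ε * s) - ibmCov m (T + ε * t) T - ibmCov m (T + ε * s) T +
        ibmCov m T T =
      ε ^ 2 * (s * t * slopeGram m T (ε * s) (ε * t)) + ε ^ (2 * m + 1) * ibmCov m t s := by
  rw [ibmCov_rect_increment m hT (le_add_of_nonneg_right (mul_nonneg hε ht))
      (le_add_of_nonneg_right (mul_nonneg hε hs)), add_sub_cancel_left, add_sub_cancel_left,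
    ibmCov_mul_mul m hε]
  congr 1
  rw [slopeGram, ← intervalIntegral.integral_const_mul, ← intervalIntegral.integral_const_mul]
  congr 1 with ξ
  rw [show T + ε * s - ξ = (T - ξ) + ε * s by ring, show T + ε * t - ξ = (T - ξ) + ε * t by ring,
    pow_add_sub_pow_eq_mul_powSlope, pow_add_sub_pow_eq_mul_powSlope]
  ring

/-- **Asymptotic covariance of rescaled increments of the `m`-fold integrated Brownian
motion.** With `k(t,s) = (1/(m!)²) ∫_0^{s∧t} (s-ξ)^m (t-ξ)^m dξ`, for every `T > 0`,
`(k(T+εt,T+εs) - k(T+εt,T) - k(T+εs,T) + k(T,T))/ε² → (1/(m!)²)(m²/(2m-1)) T^{2m-1} s t`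
as `ε → 0⁺`, uniformly for `(t,s) ∈ [0,1]²`. -/
theorem iterated_bm_asymptotic_covariance
    (m : ℕ) (hm : 1 ≤ m)
    (k : ℝ → ℝ → ℝ)
    (hk : ∀ t s, k t s = (1 / ((m.factorial : ℝ)) ^ 2) *
      ∫ ξ in Ioc (0:ℝ) (min s t), (s - ξ) ^ m * (t - ξ) ^ m)
    (T : ℝ) (hT : 0 < T) :
    TendstoUniformlyOn
      (fun ε (p : ℝ × ℝ) =>
        (k (T + ε * p.1) (T + ε * p.2) - k (T + ε * p.1) T - k (T + ε * p.2) T + k T T) / ε ^ 2)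
      (fun p => (1 / ((m.factorial : ℝ)) ^ 2) * ((m : ℝ) ^ 2 / (2 * (m : ℝ) - 1)) *
        T ^ (2 * m - 1) * p.2 * p.1)
      (nhdsWithin 0 (Ioi 0)) (Icc (0:ℝ) 1 ×ˢ Icc (0:ℝ) 1) := by
  set c : ℝ := 1 / (m.factorial : ℝ) ^ 2
  obtain rfl : k = fun t s => c * ibmCov m t s := funext₂ hk
  set Φ : ℝ → ℝ × ℝ → ℝ := fun ε p =>
    c * (p.2 * p.1 * slopeGram m T (ε * p.2) (ε * p.1) + ε ^ (2 * m - 1) * ibmCov m p.1 p.2)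
  have hΦ : TendstoUniformlyOn Φ (Φ 0) (𝓝[>] 0) (Icc (0:ℝ) 1 ×ˢ Icc (0:ℝ) 1) :=
    Continuous.tendstoUniformlyOn_of_isCompact (by fun_prop) (isCompact_Icc.prod isCompact_Icc) _ _
  have hΦ0 : Φ 0 = fun p =>
      c * ((m : ℝ) ^ 2 / (2 * (m : ℝ) - 1)) * T ^ (2 * m - 1) * p.2 * p.1 := by
    ext p
    simp only [Φ, zero_mul, slopeGram_zero_zero hm, zero_pow (by omega : 2 * m - 1 ≠ 0)]
    ring
  rw [hΦ0] at hΦ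
  refine hΦ.congr (eventually_mem_nhdsWithin.mono fun ε (hε : 0 < ε) p hp => ?_)
  have hpow : ε ^ (2 * m + 1) = ε ^ 2 * ε ^ (2 * m - 1) := by rw [← pow_add]; congr 1; omega
  simp only [Φ]
  rw [← mul_sub, ← mul_sub, ← mul_add, ibmCov_rect_increment_eq m hT.le hε.le hp.2.1 hp.1.1,
    hpow]
  field_simp
end

section
/- Let K(t,s) be the Molchan–Golosov kernel of fractional Brownian motion with H > 1/2, K(t,s) = c_H [ ((t/s)(t−s))^{H−1/2} − (H−1/2) s^{1/2−H} ∫_s^t u^{H−3/2}(u−s)^{H−1/2} du ]. Then for every T > 0, lim_{ε→0} ε^{1/2−H} K(T+εt, T+εs) = c_H (t−s)^{H−1/2} uniformly for 0 ≤ s < t ≤ 1. -/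
open MeasureTheory Set Filter Real Topology

/-!
Write `e = H - 1/2`, `x = t - s`, `a = T + εs` and `b = T + εt`, so that `b - a = εx`. The first
term of the kernel is `((b/a) εx)^e`, and after multiplication by `ε^{-e}` it differs from `x^e`
only through the factor `(b/a)^e ∈ [1, (1 + ε/T)^e]`. In the integral term the integrand is at
most `a^{e-1} (εx)^e` on an interval of length `εx ≤ ε`, so after the factor `e a^{-e} ε^{-e}` it
is at most `e ε / a ≤ e ε / T`. Both error bounds are uniform in `(t, s)` and tend to `0` with
`ε`.
-/

-- The Molchan–Golosov kernel `K(t, s)` divided by `c_H`.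
noncomputable def molchanGolosovKernel (H t s : ℝ) : ℝ :=
  (t / s * (t - s)) ^ (H - 1/2) -
    (H - 1/2) * s ^ (1/2 - H) * ∫ u in Ioc s t, u ^ (H - 3/2) * (u - s) ^ (H - 1/2)

theorem tendstoUniformlyOn_of_dist_le {ι α β : Type*} [PseudoMetricSpace β]
    {F : ι → α → β} {f : α → β} {l : Filter ι} {s : Set α} {B : ι → ℝ}
    (hB : Tendsto B l (𝓝 0)) (hFB : ∀ᶠ i in l, ∀ x ∈ s, dist (f x) (F i x) ≤ B i) :
    TendstoUniformlyOn F f l s := by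
  rw [Metric.tendstoUniformlyOn_iff]
  intro δ hδ
  filter_upwards [hFB, hB.eventually_lt_const hδ] with i hi hiδ x hx
  exact (hi x hx).trans_lt hiδ

theorem abs_setIntegral_Ioc_rpow_mul_rpow_le {a b p q : ℝ} (ha : 0 < a) (hab : a ≤ b)
    (hp : p ≤ 0) (hq : 0 ≤ q) :
    |∫ u in Ioc a b, u ^ p * (u - a) ^ q| ≤ a ^ p * (b - a) ^ q * (b - a) := by
  have hbound : ∀ u ∈ Ioc a b, ‖u ^ p * (u - a) ^ q‖ ≤ a ^ p * (b - a) ^ q := by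
    rintro u ⟨hau, hub⟩
    rw [norm_mul, norm_of_nonneg (rpow_nonneg (ha.trans hau).le p),
      norm_of_nonneg (rpow_nonneg (sub_nonneg.2 hau.le) q)]
    exact mul_le_mul (rpow_le_rpow_of_nonpos ha hau.le hp)
      (rpow_le_rpow (sub_nonneg.2 hau.le) (by linarith) hq) (by positivity) (by positivity)
  simpa [Real.volume_real_Ioc_of_le hab] using
    norm_setIntegral_le_of_norm_le_const (measure_Ioc_lt_top (μ := volume)) hbound

theorem rpow_half_sub_mul_rpow_sub_half {H ε : ℝ} (hε : 0 < ε) :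
    ε ^ (1/2 - H) * ε ^ (H - 1/2) = 1 := by
  rw [← rpow_add hε, sub_add_sub_cancel', sub_self, rpow_zero]

theorem rpow_mul_molchanGolosovKernel_sub_eq {H a ε x : ℝ} (ha : 0 < a) (hε : 0 < ε)
    (hx : 0 ≤ x) :
    ε ^ (1/2 - H) * molchanGolosovKernel H (a + ε * x) a - x ^ (H - 1/2) =
      ((1 + ε * x / a) ^ (H - 1/2) - 1) * x ^ (H - 1/2) - (H - 1/2) * (a ^ (1/2 - H) *
        (ε ^ (1/2 - H) * ∫ u in Ioc a (a + ε * x), u ^ (H - 3/2) * (u - a) ^ (H - 1/2))) := by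
  have hfirst : (a + ε * x) / a * (a + ε * x - a) = (1 + ε * x / a) * ε * x := by
    field_simp; ring
  rw [molchanGolosovKernel, hfirst, mul_rpow (by positivity) hx, mul_rpow (by positivity) hε.le]
  linear_combination ((1 + ε * x / a) ^ (H - 1/2) * x ^ (H - 1/2)) *
    rpow_half_sub_mul_rpow_sub_half (H := H) hε

theorem rpow_mul_abs_setIntegral_le {H a ε x : ℝ} (hH₀ : 1/2 ≤ H) (hH₁ : H ≤ 3/2) (ha : 0 < a)
    (hε : 0 < ε) (hx₀ : 0 ≤ x) (hx₁ : x ≤ 1) :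
    a ^ (1/2 - H) * (ε ^ (1/2 - H) *
      |∫ u in Ioc a (a + ε * x), u ^ (H - 3/2) * (u - a) ^ (H - 1/2)|) ≤ ε / a := by
  have hI := abs_setIntegral_Ioc_rpow_mul_rpow_le (b := a + ε * x) (p := H - 3/2) (q := H - 1/2) ha
    (le_add_of_nonneg_right (by positivity)) (by linarith) (by linarith)
  rw [add_sub_cancel_left, mul_rpow hε.le hx₀] at hI
  have ha' : a ^ (1/2 - H) * a ^ (H - 3/2) = a⁻¹ := by
    rw [← rpow_add ha, show 1/2 - H + (H - 3/2) = -1 by ring, rpow_neg_one]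
  have hx' : x ^ (H - 1/2) * x ≤ 1 :=
    mul_le_one₀ (rpow_le_one hx₀ hx₁ (by linarith)) hx₀ hx₁
  calc _ ≤ a ^ (1/2 - H) * (ε ^ (1/2 - H) * (a ^ (H - 3/2) * (ε ^ (H - 1/2) * x ^ (H - 1/2))
          * (ε * x))) := by gcongr
    _ = (a ^ (1/2 - H) * a ^ (H - 3/2)) * (ε ^ (1/2 - H) * ε ^ (H - 1/2)) * ε *
          (x ^ (H - 1/2) * x) := by ring
    _ = a⁻¹ * ε * (x ^ (H - 1/2) * x) := by rw [ha', rpow_half_sub_mul_rpow_sub_half hε, mul_one]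
    _ ≤ a⁻¹ * ε * 1 := by gcongr
    _ = ε / a := by ring

theorem abs_rpow_mul_molchanGolosovKernel_sub_le {H a ε x : ℝ} (hH₀ : 1/2 ≤ H) (hH₁ : H ≤ 3/2)
    (ha : 0 < a) (hε : 0 < ε) (hx₀ : 0 ≤ x) (hx₁ : x ≤ 1) :
    |ε ^ (1/2 - H) * molchanGolosovKernel H (a + ε * x) a - x ^ (H - 1/2)| ≤
      ((1 + ε / a) ^ (H - 1/2) - 1) + (H - 1/2) * (ε / a) := by
  have he : 0 ≤ H - 1/2 := by linarith
  have hratio : 1 ≤ 1 + ε * x / a := le_add_of_nonneg_right (by positivity)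
  have hratio' : 1 + ε * x / a ≤ 1 + ε / a := by
    gcongr; exact mul_le_of_le_one_right hε.le hx₁
  rw [rpow_mul_molchanGolosovKernel_sub_eq ha hε hx₀]
  refine (abs_sub _ _).trans (add_le_add ?_ ?_)
  · rw [abs_mul, abs_of_nonneg (sub_nonneg.2 (one_le_rpow hratio he)),
      abs_of_nonneg (rpow_nonneg hx₀ _)]
    exact (mul_le_mul_of_nonneg_right (by gcongr) (rpow_nonneg hx₀ _)).trans
      (mul_le_of_le_one_right (sub_nonneg.2 (one_le_rpow (hratio.trans hratio') he))
        (rpow_le_one hx₀ hx₁ he))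
  · rw [abs_mul, abs_of_nonneg he, abs_mul, abs_of_nonneg (rpow_nonneg ha.le _), abs_mul,
      abs_of_nonneg (rpow_nonneg hε.le _)]
    exact mul_le_mul_of_nonneg_left (rpow_mul_abs_setIntegral_le hH₀ hH₁ ha hε hx₀ hx₁) he

theorem tendstoUniformlyOn_rpow_mul_molchanGolosovKernel {H T : ℝ} (hH₀ : 1/2 ≤ H)
    (hH₁ : H ≤ 3/2) (hT : 0 < T) :
    TendstoUniformlyOn
      (fun ε (p : ℝ × ℝ) => ε ^ (1/2 - H) * molchanGolosovKernel H (T + ε * p.1) (T + ε * p.2))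
      (fun p => (p.1 - p.2) ^ (H - 1/2)) (𝓝[>] 0)
      {p : ℝ × ℝ | 0 ≤ p.2 ∧ p.2 ≤ p.1 ∧ p.1 - p.2 ≤ 1} := by
  have hB : Tendsto (fun ε => ((1 + ε / T) ^ (H - 1/2) - 1) + (H - 1/2) * (ε / T)) (𝓝[>] 0)
      (𝓝 0) := by
    have hcont : ContinuousAt (fun ε => ((1 + ε / T) ^ (H - 1/2) - 1) + (H - 1/2) * (ε / T)) 0 :=
      (((continuousAt_const.add (continuousAt_id.div_const T)).rpow_const (Or.inl (by simp))).sub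
        continuousAt_const).add (continuousAt_const.mul (continuousAt_id.div_const T))
    simpa using hcont.tendsto.mono_left nhdsWithin_le_nhds
  refine tendstoUniformlyOn_of_dist_le hB ?_
  filter_upwards [self_mem_nhdsWithin] with ε (hε : 0 < ε)
  rintro ⟨t, s⟩ ⟨hs, hst, hts⟩
  have hTa : T ≤ T + ε * s := le_add_of_nonneg_right (by positivity)
  have key := abs_rpow_mul_molchanGolosovKernel_sub_le hH₀ hH₁ (hT.trans_le hTa) hε
    (sub_nonneg.2 hst) hts
  rw [show T + ε * s + ε * (t - s) = T + ε * t by ring] at key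
  rw [dist_comm, dist_eq]
  refine key.trans ?_
  have he : 0 ≤ H - 1/2 := by linarith
  gcongr

theorem fbm_kernel_diagonal_scaling_general
    (H : ℝ) (hH : H ∈ Set.Ioo (1/2 : ℝ) 1)
    (cH : ℝ)
    (K : ℝ → ℝ → ℝ)
    (hK : ∀ t s : ℝ, 0 < s → s ≤ t →
      K t s = cH * ((t / s * (t - s)) ^ (H - 1/2) -
        (H - 1/2) * s ^ (1/2 - H) *
          ∫ u in Ioc s t, u ^ (H - 3/2) * (u - s) ^ (H - 1/2)))
    (T : ℝ) (hT : 0 < T) :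
    TendstoUniformlyOn
      (fun ε (p : ℝ × ℝ) => ε ^ (1/2 - H) * K (T + ε * p.1) (T + ε * p.2))
      (fun p => cH * (p.1 - p.2) ^ (H - 1/2))
      (nhdsWithin 0 (Ioi 0))
      {p : ℝ × ℝ | 0 ≤ p.2 ∧ p.2 < p.1 ∧ p.1 ≤ 1} := by
  obtain ⟨hH₀, hH₁⟩ := hH
  have hlim := (tendstoUniformlyOn_rpow_mul_molchanGolosovKernel hH₀.le (by linarith) hT).mono
    fun p (hp : 0 ≤ p.2 ∧ p.2 < p.1 ∧ p.1 ≤ 1) => ⟨hp.1, hp.2.1.le, by linarith⟩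
  refine ((uniformContinuous_mul_left' cH).comp_tendstoUniformlyOn hlim).congr ?_
  filter_upwards [self_mem_nhdsWithin] with ε (hε : 0 < ε)
  rintro ⟨t, s⟩ ⟨hs, hst, -⟩
  have hεs : T + ε * s ≤ T + ε * t := by gcongr
  simp only [Function.comp_apply, hK _ _ (by positivity) hεs, molchanGolosovKernel]
  ring

/-- **Small-time behavior of the fBm kernel near the diagonal.** Let `K` be the
Molchan–Golosov kernel of fractional Brownian motion with Hurst index `H > 1/2`. Then for every
`T > 0`, `ε^{1/2-H} K(T+εt, T+εs) → c_H (t-s)^{H-1/2}` as `ε → 0⁺`, uniformly for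
`0 ≤ s < t ≤ 1`. -/
theorem fbm_kernel_diagonal_scaling
    (H : ℝ) (hH : H ∈ Set.Ioo (1/2 : ℝ) 1)
    (cH : ℝ)
    (hcH : cH = Real.sqrt (2 * H * Real.Gamma (3/2 - H) /
      (Real.Gamma (H + 1/2) * Real.Gamma (2 - 2 * H))))
    (K : ℝ → ℝ → ℝ)
    (hK : ∀ t s : ℝ, 0 < s → s ≤ t →
      K t s = cH * ((t / s * (t - s)) ^ (H - 1/2) -
        (H - 1/2) * s ^ (1/2 - H) *
          ∫ u in Ioc s t, u ^ (H - 3/2) * (u - s) ^ (H - 1/2)))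
    (T : ℝ) (hT : 0 < T) :
    TendstoUniformlyOn
      (fun ε (p : ℝ × ℝ) => ε ^ (1/2 - H) * K (T + ε * p.1) (T + ε * p.2))
      (fun p => cH * (p.1 - p.2) ^ (H - 1/2))
      (nhdsWithin 0 (Ioi 0))
      {p : ℝ × ℝ | 0 ≤ p.2 ∧ p.2 < p.1 ∧ p.1 ≤ 1} :=
  fbm_kernel_diagonal_scaling_general H hH cH K hK T hT
end

section
/- For the fractional Brownian motion kernel K with H > 1/2 and fixed T > 0, lim_{ε→0} (1/ε) ∫_0^T (K(T+εt, u) − K(T,u)) du = t (H−1/2) c_H [ ∫_0^T u^{1/2−H} (T^{H−3/2}(T−u)^{H−1/2} + T^{H−1/2}(T−u)^{H−3/2}) du − ∫_0^T u^{1/2−H} (T−u)^{H−1/2} T^{H−3/2} du ], uniformly in t ∈ [0,1]; consequently lim_{ε→0} ε^{-H} ∫_0^T (K(T+εt,u) − K(T,u)) du = 0 when H > 1/2. -/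
/-!
Write `p = H - 1/2`. Differentiating `v ↦ v^p (v-u)^p` turns the definition of `K` into
`K(s,u) - K(T,u) = c_H p u^{-p} ∫_T^s v^p (v-u)^{p-1} dv` for `0 < u < T ≤ s`. On `[T, T+ε]`
the factor `v^p` increases and `(v-u)^{p-1}` decreases, so for `s = T + εt` the integral over
`u ∈ (0,T]` lies between `εt·lo(ε)` and `εt·hi(ε)`, where `lo` and `hi` both tend to
`c_H p T^p ∫_0^T u^{-p} (T-u)^{p-1} du` (dominated convergence for `lo`, continuity for `hi`).
Dividing by `ε` gives the first limit uniformly in `t ∈ [0,1]` (the terms with `T^{p-1}(T-u)^p`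
in the stated limit cancel); multiplying by `ε^{-H} = ε^{1-H}/ε` gives `0`, since `H < 1`.
-/

open MeasureTheory Set Filter Real Topology

lemma rpow_le_rpow_add_rpow_of_mem_Icc {x y z : ℝ} (c : ℝ) (hx : 0 < x) (hz : z ∈ Icc x y) :
    z ^ c ≤ x ^ c + y ^ c := by
  have hx' := rpow_nonneg hx.le c
  have hy' := rpow_nonneg (hx.le.trans (hz.1.trans hz.2)) c
  rcases le_or_gt 0 c with hc | hc
  · linarith [rpow_le_rpow (hx.le.trans hz.1) hz.2 hc]
  · linarith [rpow_le_rpow_of_nonpos hx hz.1 hc.le]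

lemma integrableOn_rpow_mul_sub_rpow {a b T : ℝ} (hT : 0 < T) (ha : -1 < a) (hb : -1 < b) :
    IntegrableOn (fun u ↦ u ^ a * (T - u) ^ b) (Ioo 0 T) := by
  have hT2 : 0 < T / 2 := half_pos hT
  have left : IntegrableOn (fun u : ℝ ↦ u ^ a) (Ioo 0 T) :=
    (intervalIntegral.intervalIntegrable_rpow' ha).1.mono_set Ioo_subset_Ioc_self
  have right : IntegrableOn (fun u : ℝ ↦ (T - u) ^ b) (Ioo 0 T) := by
    have h := (intervalIntegral.intervalIntegrable_rpow' hb (a := 0) (b := T)).comp_sub_left T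
    simp only [sub_zero, sub_self] at h
    exact h.2.mono_set Ioo_subset_Ioc_self
  -- Near `0` the factor `(T - u) ^ b` is bounded, near `T` the factor `u ^ a` is.
  refine ((left.const_mul ((T / 2) ^ b + T ^ b)).add
    (right.const_mul ((T / 2) ^ a + T ^ a))).mono' (by fun_prop) ?_
  filter_upwards [ae_restrict_mem measurableSet_Ioo] with u ⟨hu0, huT⟩
  have hua := rpow_nonneg hu0.le a
  have hub := rpow_nonneg (sub_pos.2 huT).le b
  rw [norm_of_nonneg (mul_nonneg hua hub), Pi.add_apply]
  rcases le_total u (T / 2) with h | h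
  · have := rpow_le_rpow_add_rpow_of_mem_Icc b hT2 (y := T) (z := T - u) ⟨by linarith, by linarith⟩
    nlinarith [mul_nonneg (by positivity : (0:ℝ) ≤ (T / 2) ^ a + T ^ a) hub]
  · have := rpow_le_rpow_add_rpow_of_mem_Icc a hT2 (y := T) ⟨h, huT.le⟩
    nlinarith [mul_nonneg (by positivity : (0:ℝ) ≤ (T / 2) ^ b + T ^ b) hua]

lemma setIntegral_mem_Icc_of_mem_Icc {α : Type*} [MeasurableSpace α] {μ : Measure α} {s : Set α}
    {f g h : α → ℝ} (hs : MeasurableSet s) (hg : IntegrableOn g s μ) (hh : IntegrableOn h s μ)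
    (hf : AEStronglyMeasurable f (μ.restrict s)) (hfgh : ∀ x ∈ s, f x ∈ Icc (g x) (h x)) :
    ∫ x in s, f x ∂μ ∈ Icc (∫ x in s, g x ∂μ) (∫ x in s, h x ∂μ) := by
  have hfi : IntegrableOn f s μ := (hg.norm.add hh.norm).mono' hf <|
    (ae_restrict_mem hs).mono fun x hx ↦ by
      obtain ⟨h₁, h₂⟩ := hfgh x hx
      simp only [Pi.add_apply, Real.norm_eq_abs, abs_le]
      constructor <;> cases abs_cases (g x) <;> cases abs_cases (h x) <;> linarith
  exact ⟨setIntegral_mono_on hg hfi hs fun x hx ↦ (hfgh x hx).1,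
    setIntegral_mono_on hfi hh hs fun x hx ↦ (hfgh x hx).2⟩

lemma intervalIntegrable_rpow_mul_sub_rpow (α β : ℝ) {u a b : ℝ} (ha : 0 < a) (hab : a ≤ b)
    (hu : u < a ∨ 0 ≤ β) :
    IntervalIntegrable (fun v ↦ v ^ α * (v - u) ^ β) volume a b := by
  refine ContinuousOn.intervalIntegrable ?_
  rw [uIcc_of_le hab]
  refine (continuousOn_id.rpow_const fun v hv ↦ Or.inl (ha.trans_le hv.1).ne').mul
    ((continuousOn_id.sub continuousOn_const).rpow_const fun v hv ↦ ?_)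
  exact hu.imp (fun h ↦ (sub_pos.2 (h.trans_le hv.1)).ne') id

lemma integral_rpow_mul_sub_rpow_mem_Icc {α β u T s δ : ℝ} (hα : 0 ≤ α) (hβ : β ≤ 0)
    (hT : 0 < T) (huT : u < T) (hTs : T ≤ s) (hsδ : s ≤ T + δ) :
    ∫ v in Ioc T s, v ^ α * (v - u) ^ β ∈
      Icc ((s - T) * (T ^ α * (T + δ - u) ^ β)) ((s - T) * ((T + δ) ^ α * (T - u) ^ β)) := by
  have hint := (intervalIntegrable_rpow_mul_sub_rpow α β hT hTs (.inl huT)).1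
  have hvol : volume.real (Ioc T s) = s - T := Real.volume_real_Ioc_of_le hTs
  constructor
  · rw [mul_comm, ← hvol]
    refine setIntegral_ge_of_const_le_real measurableSet_Ioc measure_Ioc_lt_top.ne
      (fun v hv ↦ ?_) hint
    exact mul_le_mul (rpow_le_rpow hT.le hv.1.le hα)
      (rpow_le_rpow_of_nonpos (by linarith [hv.1]) (by linarith [hv.2]) hβ)
      (rpow_nonneg (by linarith [hv.1]) β) (rpow_nonneg (hT.le.trans hv.1.le) α)
  · rw [← hvol, ← smul_eq_mul, ← setIntegral_const]
    refine setIntegral_mono_on hint (integrableOn_const measure_Ioc_lt_top.ne) measurableSet_Ioc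
      (fun v hv ↦ ?_)
    exact mul_le_mul (rpow_le_rpow (hT.le.trans hv.1.le) (by linarith [hv.2]) hα)
      (rpow_le_rpow_of_nonpos (by linarith) (by linarith [hv.1]) hβ)
      (rpow_nonneg (by linarith [hv.1]) β) (rpow_nonneg (by linarith [hv.1, hv.2]) α)

lemma integral_deriv_rpow_mul_sub_rpow (p : ℝ) {u T s : ℝ} (hT : 0 < T) (huT : u < T)
    (hTs : T ≤ s) :
    ∫ v in T..s, p * (v ^ (p - 1) * (v - u) ^ p + v ^ p * (v - u) ^ (p - 1)) =
      s ^ p * (s - u) ^ p - T ^ p * (T - u) ^ p := by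
  refine intervalIntegral.integral_eq_sub_of_hasDerivAt (f := fun v ↦ v ^ p * (v - u) ^ p)
    (fun v hv ↦ ?_) ?_
  · rw [uIcc_of_le hTs] at hv
    have h1 : HasDerivAt (fun v : ℝ ↦ v ^ p) (p * v ^ (p - 1)) v :=
      hasDerivAt_rpow_const (Or.inl (hT.trans_le hv.1).ne')
    have h2 : HasDerivAt (fun v : ℝ ↦ (v - u) ^ p) (1 * p * (v - u) ^ (p - 1)) v :=
      ((hasDerivAt_id v).sub_const u).rpow_const (Or.inl (sub_pos.2 (huT.trans_le hv.1)).ne')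
    exact (h1.mul h2).congr_deriv (by ring)
  · exact ((intervalIntegrable_rpow_mul_sub_rpow _ _ hT hTs (.inl huT)).add
      (intervalIntegrable_rpow_mul_sub_rpow _ _ hT hTs (.inl huT))).const_mul p

lemma norm_rpow_mul_add_sub_rpow_le {a b T δ u : ℝ} (hb : b ≤ 0) (hδ : 0 ≤ δ) (hu : u ∈ Ioo 0 T) :
    ‖u ^ a * (T + δ - u) ^ b‖ ≤ u ^ a * (T - u) ^ b := by
  obtain ⟨hu0, huT⟩ := hu
  rw [norm_of_nonneg (mul_nonneg (rpow_nonneg hu0.le _) (rpow_nonneg (by linarith) _))]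
  exact mul_le_mul_of_nonneg_left (rpow_le_rpow_of_nonpos (by linarith) (by linarith) hb)
    (rpow_nonneg hu0.le _)

lemma tendsto_integral_rpow_mul_add_sub_rpow {a b T : ℝ} (hT : 0 < T) (ha : -1 < a) (hb : -1 < b)
    (hb0 : b ≤ 0) :
    Tendsto (fun δ ↦ ∫ u in Ioo 0 T, u ^ a * (T + δ - u) ^ b) (𝓝[≥] 0)
      (𝓝 (∫ u in Ioo 0 T, u ^ a * (T - u) ^ b)) := by
  refine tendsto_integral_filter_of_dominated_convergence _ (.of_forall fun δ ↦ by fun_prop) ?_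
    (integrableOn_rpow_mul_sub_rpow hT ha hb) ?_
  · filter_upwards [self_mem_nhdsWithin] with δ hδ
    filter_upwards [ae_restrict_mem measurableSet_Ioo] with u hu
    exact norm_rpow_mul_add_sub_rpow_le hb0 hδ hu
  · filter_upwards [ae_restrict_mem measurableSet_Ioo] with u ⟨_, huT⟩
    have hcont : ContinuousAt (fun δ ↦ (T + δ - u) ^ b) 0 :=
      ((continuous_const_add T).sub continuous_const).continuousAt.rpow_const
        (Or.inl (by simp only [Pi.sub_apply, add_zero]; linarith))
    simpa using tendsto_nhdsWithin_of_tendsto_nhds (hcont.tendsto.const_mul (u ^ a))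

lemma integral_rpow_mul_add_sub_integral_eq {a b T : ℝ} (hT : 0 < T) (ha : -1 < a) (hb : 0 < b) :
    (∫ u in Ioc 0 T, u ^ a * (T ^ (b - 1) * (T - u) ^ b + T ^ b * (T - u) ^ (b - 1))) -
      ∫ u in Ioc 0 T, u ^ a * (T - u) ^ b * T ^ (b - 1) =
    T ^ b * ∫ u in Ioo 0 T, u ^ a * (T - u) ^ (b - 1) := by
  have hf₁ : IntegrableOn (fun u ↦ u ^ a * (T - u) ^ b) (Ioo 0 T) :=
    integrableOn_rpow_mul_sub_rpow hT ha (by linarith)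
  have hf₂ : IntegrableOn (fun u ↦ u ^ a * (T - u) ^ (b - 1)) (Ioo 0 T) :=
    integrableOn_rpow_mul_sub_rpow hT ha (by linarith)
  rw [integral_Ioc_eq_integral_Ioo, integral_Ioc_eq_integral_Ioo, ← integral_sub
    (((hf₁.const_mul (T ^ (b - 1))).add (hf₂.const_mul (T ^ b))).congr
      (.of_forall fun u ↦ by simp only [Pi.add_apply]; ring))
    ((hf₁.const_mul (T ^ (b - 1))).congr (.of_forall fun u ↦ by ring)), ← integral_const_mul]
  exact integral_congr_ae (.of_forall fun u ↦ by ring)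

lemma tendstoUniformlyOn_Icc_of_mem_Icc_mul {F : ℝ → ℝ → ℝ} {lo hi : ℝ → ℝ} {L : ℝ}
    {l : Filter ℝ} (hlo : Tendsto lo l (𝓝 L)) (hhi : Tendsto hi l (𝓝 L))
    (h : ∀ᶠ ε in l, ∀ t ∈ Icc (0:ℝ) 1, F ε t ∈ Icc (t * lo ε) (t * hi ε)) :
    TendstoUniformlyOn F (fun t ↦ t * L) l (Icc 0 1) := by
  rw [Metric.tendstoUniformlyOn_iff]
  intro δ hδ
  filter_upwards [h, Metric.tendsto_nhds.1 hlo δ hδ, Metric.tendsto_nhds.1 hhi δ hδ]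
    with ε hF hloε hhiε t ht
  rw [Real.dist_eq] at hloε hhiε ⊢
  obtain ⟨hlow, hup⟩ := hF t ht
  have h1 := mul_le_mul_of_nonneg_left (neg_abs_le (lo ε - L)) ht.1
  have h2 := mul_le_mul_of_nonneg_left (le_abs_self (hi ε - L)) ht.1
  have h3 := mul_le_mul_of_nonneg_right ht.2 (abs_nonneg (lo ε - L))
  have h4 := mul_le_mul_of_nonneg_right ht.2 (abs_nonneg (hi ε - L))
  rw [abs_lt]
  constructor <;> nlinarith

lemma tendstoUniformlyOn_Icc_mul_of_mem_Icc_mul {X : ℝ → ℝ → ℝ} {c lo hi : ℝ → ℝ} {L m : ℝ}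
    {l : Filter ℝ} (hlo : Tendsto lo l (𝓝 L)) (hhi : Tendsto hi l (𝓝 L))
    (hc : Tendsto (fun ε ↦ c ε * ε) l (𝓝 m)) (hc₀ : ∀ᶠ ε in l, 0 ≤ c ε)
    (hX : ∀ᶠ ε in l, ∀ t ∈ Icc (0:ℝ) 1, X ε t ∈ Icc (ε * t * lo ε) (ε * t * hi ε)) :
    TendstoUniformlyOn (fun ε t ↦ c ε * X ε t) (fun t ↦ t * (m * L)) l (Icc 0 1) := by
  refine tendstoUniformlyOn_Icc_of_mem_Icc_mul (hc.mul hlo) (hc.mul hhi) ?_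
  filter_upwards [hc₀, hX] with ε hcε hXε t ht
  obtain ⟨h₁, h₂⟩ := hXε t ht
  constructor
  · nlinarith [mul_le_mul_of_nonneg_left h₁ hcε]
  · nlinarith [mul_le_mul_of_nonneg_left h₂ hcε]

def IsMolchanGolosovKernel (H cH : ℝ) (K : ℝ → ℝ → ℝ) : Prop :=
  ∀ t s : ℝ, 0 < s → s ≤ t →
    K t s = cH * ((t / s * (t - s)) ^ (H - 1/2) -
      (H - 1/2) * s ^ (1/2 - H) * ∫ u in Ioc s t, u ^ (H - 3/2) * (u - s) ^ (H - 1/2))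

lemma kernel_sub_kernel_eq {H cH : ℝ} {K : ℝ → ℝ → ℝ} (hH : 1/2 ≤ H)
    (hK : IsMolchanGolosovKernel H cH K) {u T s : ℝ} (hu : 0 < u) (huT : u < T) (hTs : T ≤ s) :
    K s u - K T u = cH * (H - 1/2) *
      (u ^ (1/2 - H) * ∫ v in Ioc T s, v ^ (H - 1/2) * (v - u) ^ (H - 3/2)) := by
  have hT : 0 < T := hu.trans huT
  have hp : 0 ≤ H - 1/2 := by linarith
  unfold IsMolchanGolosovKernel at hK
  rw [show H - 3/2 = (H - 1/2) - 1 by ring, show 1/2 - H = -(H - 1/2) by ring] at hK ⊢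
  generalize H - 1/2 = p at hK hp ⊢
  have hK' : ∀ t, u ≤ t → K t u = cH * (u ^ (-p) * (t ^ p * (t - u) ^ p) -
      p * u ^ (-p) * ∫ v in u..t, v ^ (p - 1) * (v - u) ^ p) := fun t ht ↦ by
    rw [hK t u hu ht, intervalIntegral.integral_of_le ht,
      mul_rpow (div_nonneg (hu.le.trans ht) hu.le) (sub_nonneg.2 ht),
      div_rpow (hu.le.trans ht) hu.le, rpow_neg hu.le]
    ring
  have hsplit := intervalIntegral.integral_interval_sub_left
    (intervalIntegrable_rpow_mul_sub_rpow (u := u) (p - 1) p hu (huT.le.trans hTs) (.inr hp))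
    (intervalIntegrable_rpow_mul_sub_rpow (u := u) (p - 1) p hu huT.le (.inr hp))
  have hftc := integral_deriv_rpow_mul_sub_rpow p hT huT hTs
  rw [intervalIntegral.integral_const_mul,
    intervalIntegral.integral_add (intervalIntegrable_rpow_mul_sub_rpow _ _ hT hTs (.inl huT))
      (intervalIntegrable_rpow_mul_sub_rpow _ _ hT hTs (.inl huT))] at hftc
  rw [hK' s (huT.le.trans hTs), hK' T huT.le, ← intervalIntegral.integral_of_le hTs]
  linear_combination -cH * u ^ (-p) * hftc - cH * p * u ^ (-p) * hsplit

lemma integral_kernel_sub_kernel_mem_Icc {H cH : ℝ} {K : ℝ → ℝ → ℝ} (hH₀ : 1/2 < H)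
    (hH₁ : H < 3/2) (hcH : 0 ≤ cH) (hK : IsMolchanGolosovKernel H cH K) {T s δ : ℝ}
    (hT : 0 < T) (hTs : T ≤ s) (hsδ : s ≤ T + δ) :
    ∫ u in Ioc 0 T, (K s u - K T u) ∈
      Icc ((s - T) * (cH * (H - 1/2) * T ^ (H - 1/2) *
            ∫ u in Ioo 0 T, u ^ (1/2 - H) * (T + δ - u) ^ (H - 3/2)))
        ((s - T) * (cH * (H - 1/2) * (T + δ) ^ (H - 1/2) *
            ∫ u in Ioo 0 T, u ^ (1/2 - H) * (T - u) ^ (H - 3/2))) := by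
  have hβ : H - 3/2 ≤ 0 := by linarith
  have hbeta : IntegrableOn (fun u ↦ u ^ (1/2 - H) * (T - u) ^ (H - 3/2)) (Ioo 0 T) :=
    integrableOn_rpow_mul_sub_rpow hT (by linarith) (by linarith)
  have hbeta' : IntegrableOn (fun u ↦ u ^ (1/2 - H) * (T + δ - u) ^ (H - 3/2)) (Ioo 0 T) :=
    hbeta.mono' (by fun_prop) <| (ae_restrict_mem measurableSet_Ioo).mono fun u hu ↦
      norm_rpow_mul_add_sub_rpow_le hβ (by linarith) hu
  have hmeas : StronglyMeasurable fun u ↦ ∫ v in Ioc T s, v ^ (H - 1/2) * (v - u) ^ (H - 3/2) :=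
    (Measurable.stronglyMeasurable (f := Function.uncurry fun u v : ℝ ↦
      v ^ (H - 1/2) * (v - u) ^ (H - 3/2)) (by fun_prop)).integral_prod_right
  obtain ⟨hlo, hhi⟩ := setIntegral_mem_Icc_of_mem_Icc (f := fun u ↦
      u ^ (1/2 - H) * ∫ v in Ioc T s, v ^ (H - 1/2) * (v - u) ^ (H - 3/2)) measurableSet_Ioo
    (hbeta'.const_mul ((s - T) * T ^ (H - 1/2))) (hbeta.const_mul ((s - T) * (T + δ) ^ (H - 1/2)))
    ((measurable_id.pow_const _).aestronglyMeasurable.mul hmeas.aestronglyMeasurable).restrict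
    fun u ⟨hu0, huT⟩ ↦ by
      obtain ⟨h₁, h₂⟩ := integral_rpow_mul_sub_rpow_mem_Icc (α := H - 1/2) (by linarith) hβ hT
        huT hTs hsδ
      have hu := rpow_nonneg hu0.le (1/2 - H)
      exact ⟨by nlinarith [mul_le_mul_of_nonneg_left h₁ hu],
        by nlinarith [mul_le_mul_of_nonneg_left h₂ hu]⟩
  have heq : ∫ u in Ioc 0 T, (K s u - K T u) = cH * (H - 1/2) *
      ∫ u in Ioo 0 T, u ^ (1/2 - H) * ∫ v in Ioc T s, v ^ (H - 1/2) * (v - u) ^ (H - 3/2) := by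
    rw [integral_Ioc_eq_integral_Ioo, ← integral_const_mul]
    exact setIntegral_congr_fun measurableSet_Ioo fun u hu ↦
      kernel_sub_kernel_eq hH₀.le hK hu.1 hu.2 hTs
  have hc : 0 ≤ cH * (H - 1/2) := mul_nonneg hcH (by linarith)
  rw [integral_const_mul] at hlo hhi
  rw [heq]
  constructor
  · calc _ = cH * (H - 1/2) * ((s - T) * T ^ (H - 1/2) *
          ∫ u in Ioo 0 T, u ^ (1/2 - H) * (T + δ - u) ^ (H - 3/2)) := by ring
      _ ≤ _ := mul_le_mul_of_nonneg_left hlo hc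
  · calc _ ≤ cH * (H - 1/2) * ((s - T) * (T + δ) ^ (H - 1/2) *
          ∫ u in Ioo 0 T, u ^ (1/2 - H) * (T - u) ^ (H - 3/2)) := mul_le_mul_of_nonneg_left hhi hc
      _ = _ := by ring

lemma exists_tendsto_sandwich_integral_kernel_sub_kernel {H cH : ℝ} {K : ℝ → ℝ → ℝ}
    (hH₀ : 1/2 < H) (hH₁ : H < 3/2) (hcH : 0 ≤ cH) (hK : IsMolchanGolosovKernel H cH K)
    {T : ℝ} (hT : 0 < T) :
    ∃ lo hi : ℝ → ℝ,
      Tendsto lo (𝓝[>] 0) (𝓝 (cH * (H - 1/2) * T ^ (H - 1/2) *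
        ∫ u in Ioo 0 T, u ^ (1/2 - H) * (T - u) ^ (H - 3/2))) ∧
      Tendsto hi (𝓝[>] 0) (𝓝 (cH * (H - 1/2) * T ^ (H - 1/2) *
        ∫ u in Ioo 0 T, u ^ (1/2 - H) * (T - u) ^ (H - 3/2))) ∧
      ∀ ε, 0 ≤ ε → ∀ t ∈ Icc (0:ℝ) 1,
        ∫ u in Ioc 0 T, (K (T + ε * t) u - K T u) ∈ Icc (ε * t * lo ε) (ε * t * hi ε) := by
  refine ⟨fun ε ↦ cH * (H - 1/2) * T ^ (H - 1/2) *
      ∫ u in Ioo 0 T, u ^ (1/2 - H) * (T + ε - u) ^ (H - 3/2),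
    fun ε ↦ cH * (H - 1/2) * (T + ε) ^ (H - 1/2) *
      ∫ u in Ioo 0 T, u ^ (1/2 - H) * (T - u) ^ (H - 3/2), ?_, ?_, fun ε hε t ht ↦ ?_⟩
  · exact ((tendsto_integral_rpow_mul_add_sub_rpow hT (by linarith) (by linarith)
      (by linarith)).mono_left (nhdsWithin_mono _ Ioi_subset_Ici_self)).const_mul _
  · refine tendsto_nhdsWithin_of_tendsto_nhds (Continuous.tendsto' ?_ 0 _ (by simp))
    exact ((continuous_const_add T).rpow_const fun _ ↦ .inr (by linarith)).const_mul _
      |>.mul_const _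
  · have h := integral_kernel_sub_kernel_mem_Icc hH₀ hH₁ hcH hK hT (s := T + ε * t) (δ := ε)
      (by nlinarith [ht.1]) (by nlinarith [ht.2])
    rwa [add_sub_cancel_left] at h

/-- **Asymptotics of the cross-covariance of fBm with its driving Brownian motion.** For the
Molchan–Golosov fBm kernel `K` with `H > 1/2` and fixed `T > 0`,
`(1/ε) ∫_0^T (K(T+εt,u) - K(T,u)) du` converges, uniformly in `t ∈ [0,1]`, to
`t (H-1/2) c_H [ ∫_0^T u^{1/2-H}(T^{H-3/2}(T-u)^{H-1/2} + T^{H-1/2}(T-u)^{H-3/2}) du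
  - ∫_0^T u^{1/2-H}(T-u)^{H-1/2} T^{H-3/2} du ]`;
consequently `ε^{-H} ∫_0^T (K(T+εt,u) - K(T,u)) du → 0` uniformly in `t ∈ [0,1]`. -/
theorem fbm_cross_covariance_asymptotics
    (H : ℝ) (hH : H ∈ Set.Ioo (1/2 : ℝ) 1)
    (cH : ℝ)
    (hcH : cH = Real.sqrt (2 * H * Real.Gamma (3/2 - H) /
      (Real.Gamma (H + 1/2) * Real.Gamma (2 - 2 * H))))
    (K : ℝ → ℝ → ℝ)
    (hK : ∀ t s : ℝ, 0 < s → s ≤ t →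
      K t s = cH * ((t / s * (t - s)) ^ (H - 1/2) -
        (H - 1/2) * s ^ (1/2 - H) *
          ∫ u in Ioc s t, u ^ (H - 3/2) * (u - s) ^ (H - 1/2)))
    (T : ℝ) (hT : 0 < T) :
    TendstoUniformlyOn
      (fun ε (t : ℝ) => (1 / ε) * ∫ u in Ioc (0:ℝ) T, (K (T + ε * t) u - K T u))
      (fun t => t * (H - 1/2) * cH *
        ((∫ u in Ioc (0:ℝ) T, u ^ (1/2 - H) *
            (T ^ (H - 3/2) * (T - u) ^ (H - 1/2) + T ^ (H - 1/2) * (T - u) ^ (H - 3/2))) -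
         ∫ u in Ioc (0:ℝ) T, u ^ (1/2 - H) * (T - u) ^ (H - 1/2) * T ^ (H - 3/2)))
      (nhdsWithin 0 (Ioi 0)) (Icc (0:ℝ) 1) ∧
    TendstoUniformlyOn
      (fun ε (t : ℝ) => ε ^ (-H) * ∫ u in Ioc (0:ℝ) T, (K (T + ε * t) u - K T u))
      (fun _ => 0)
      (nhdsWithin 0 (Ioi 0)) (Icc (0:ℝ) 1) := by
  obtain ⟨hH₀, hH₁⟩ := hH
  obtain ⟨lo, hi, hlo, hhi, hX⟩ := exists_tendsto_sandwich_integral_kernel_sub_kernel hH₀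
    (by linarith) (hcH ▸ sqrt_nonneg _) hK hT
  have hpos : ∀ᶠ ε in 𝓝[>] (0:ℝ), 0 < ε := eventually_mem_nhdsWithin
  have hX' := hpos.mono fun ε hε ↦ hX ε hε.le
  constructor
  · have hc : Tendsto (fun ε : ℝ ↦ 1 / ε * ε) (𝓝[>] 0) (𝓝 1) :=
      tendsto_const_nhds.congr' (hpos.mono fun ε hε ↦ (one_div_mul_cancel hε.ne').symm)
    refine (tendstoUniformlyOn_Icc_mul_of_mem_Icc_mul hlo hhi hc
      (hpos.mono fun ε hε ↦ (one_div_pos.2 hε).le) hX').congr_right fun t _ ↦ ?_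
    have h := integral_rpow_mul_add_sub_integral_eq hT (a := 1/2 - H) (b := H - 1/2)
      (by linarith) (by linarith)
    rw [show H - 1/2 - 1 = H - 3/2 by ring] at h
    rw [h]
    ring
  · have hc : Tendsto (fun ε : ℝ ↦ ε ^ (-H) * ε) (𝓝[>] 0) (𝓝 0) := by
      refine Tendsto.congr' (hpos.mono fun ε hε ↦ ?_) <| tendsto_nhdsWithin_of_tendsto_nhds <|
        (continuous_rpow_const (by linarith)).tendsto' 0 0 (zero_rpow (by linarith : 1 - H ≠ 0))
      dsimp only
      rw [← rpow_add_one hε.ne', neg_add_eq_sub]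
    refine (tendstoUniformlyOn_Icc_mul_of_mem_Icc_mul hlo hhi hc
      (hpos.mono fun ε hε ↦ rpow_nonneg hε.le _) hX').congr_right fun t _ ↦ ?_
    simp
end
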